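/- arXiv:1410.5351 — 2 statements merged into one kernel-verified Lean document; each statement's English description precedes it below -/
import Mathlib

section
/- If S is a finitely generated residually finite semigroup, then the monoid End(S) of semigroup endomorphisms of S (under composition) is residually finite. -/
/-- A semigroup `S` is residually finite if any two distinct elements can be
separated by a semigroup homomorphism into a finite semigroup. -/
def SemigroupResiduallyFinite (S : Type) [Semigroup S] : Prop :=
  ∀ s1 s2 : S, s1 ≠ s2 → ∃ (T : Type) (mT : Semigroup T), Finite T ∧
    ∃ ρ : S → T, (∀ a b : S, ρ (a * b) = mT.mul (ρ a) (ρ b)) ∧ ρ s1 ≠ ρ s2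

/-!
Pick `s` with `α₁ s ≠ α₂ s` and a homomorphism `ρ : S → T` to a finite semigroup separating
`α₁ s` from `α₂ s`. Since `S` is finitely generated, a homomorphism `S → T` is determined by its
values on the generators, so `Hom(S, T)` is finite. Precomposition makes `End(S)` act on this
finite set, giving a monoid homomorphism into the (opposite of the) finite monoid of self-maps
of `Hom(S, T)`; it separates `α₁` from `α₂` because `ρ ∘ α₁ ≠ ρ ∘ α₂`.
-/

theorem SemigroupResiduallyFinite.exists_mulHom_ne {S : Type} [Semigroup S]
    (h : SemigroupResiduallyFinite S) {s₁ s₂ : S} (hs : s₁ ≠ s₂) :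
    ∃ (T : Type) (_ : Semigroup T) (_ : Finite T) (ρ : S →ₙ* T), ρ s₁ ≠ ρ s₂ := by
  obtain ⟨T, mT, hT, ρ, hρ, hne⟩ := h s₁ s₂ hs
  exact ⟨T, mT, hT, ⟨ρ, hρ⟩, hne⟩

namespace MulHom

theorem finite_of_closure_eq_top {S T : Type*} [Mul S] [Mul T] [Finite T] {F : Finset S}
    (hF : Subsemigroup.closure (F : Set S) = ⊤) : Finite (S →ₙ* T) :=
  Finite.of_injective (fun φ : S →ₙ* T => fun x : F => φ x) fun _ _ h =>
    eq_of_eqOn_dense hF fun x hx => congrFun h ⟨x, hx⟩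

variable (S T : Type*) [Mul S] [Mul T]

def precomp (f : S →ₙ* S) : (Function.End (S →ₙ* T))ᵐᵒᵖ :=
  MulOpposite.op fun φ : S →ₙ* T => φ.comp f

variable {S T}

theorem precomp_id : precomp S T (MulHom.id S) = 1 :=
  MulOpposite.unop_injective <| funext comp_id

theorem precomp_comp (f g : S →ₙ* S) : precomp S T (f.comp g) = precomp S T f * precomp S T g :=
  MulOpposite.unop_injective <| funext fun φ => (comp_assoc g f φ).symm

end MulHom

/-- If `S` is a finitely generated residually finite semigroup, then the monoid
`End(S)` of semigroup endomorphisms of `S` (under composition, with identity the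
identity endomorphism) is residually finite: any two distinct endomorphisms can
be separated by a monoid homomorphism into a finite monoid. -/
theorem stmt_3 (S : Type) [Semigroup S]
    (hfg : ∃ F : Finset S, Subsemigroup.closure (F : Set S) = ⊤)
    (hrf : SemigroupResiduallyFinite S)
    (α1 α2 : S →ₙ* S) (hne : α1 ≠ α2) :
    ∃ (N : Type) (mN : Monoid N), Finite N ∧
      ∃ Φ : (S →ₙ* S) → N,
        Φ (MulHom.id S) = mN.one ∧
        (∀ f g : S →ₙ* S, Φ (f.comp g) = mN.mul (Φ f) (Φ g)) ∧
        Φ α1 ≠ Φ α2 := by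
  obtain ⟨F, hF⟩ := hfg
  obtain ⟨s, hs⟩ := DFunLike.ne_iff.mp hne
  obtain ⟨T, _, _, ρ, hρ⟩ := hrf.exists_mulHom_ne hs
  have : Finite (S →ₙ* T) := MulHom.finite_of_closure_eq_top hF
  have : Finite (Function.End (S →ₙ* T)) := Pi.finite
  refine ⟨_, inferInstance, Finite.of_equiv _ MulOpposite.opEquiv, MulHom.precomp S T,
    MulHom.precomp_id, MulHom.precomp_comp, fun h => hρ ?_⟩
  exact DFunLike.congr_fun (congrFun (congrArg MulOpposite.unop h) ρ) s
end

section
/- Let M be a monoid and A a finite set with more than one element. Then M is residually finite if and only if the set of periodic configurations in A^M is dense in A^M for the prodiscrete topology. -/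
def shift {M A : Type} [Monoid M] (m : M) (x : M → A) : M → A :=
  fun m' => x (m' * m)

/-- A monoid `M` is residually finite if any two distinct elements can be
separated by a monoid homomorphism into a finite monoid. -/
def MonoidResiduallyFinite (M : Type) [Monoid M] : Prop :=
  ∀ m1 m2 : M, m1 ≠ m2 → ∃ (N : Type) (mN : Monoid N), Finite N ∧
    ∃ ρ : M → N, ρ 1 = mN.one ∧ (∀ a b : M, ρ (a * b) = mN.mul (ρ a) (ρ b)) ∧
      ρ m1 ≠ ρ m2

/-!
If `φ : M →* N` has finite target, every configuration factoring through `φ` is periodic, since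
its shift by `m` only depends on `φ m`. Residual finiteness gives such a `φ` injective on any
prescribed finite window, so every pattern on a finite window extends to a periodic
configuration. Conversely, a periodic configuration taking different values at `m₁` and `m₂`
yields the action of `M` on its finite orbit, a homomorphism `M →* Function.End orbit`
separating `m₁` from `m₂`.
-/

open Set

theorem monoidResiduallyFinite_iff {M : Type} [Monoid M] :
    MonoidResiduallyFinite M ↔ ∀ m₁ m₂ : M, m₁ ≠ m₂ →
      ∃ (N : Type) (_ : Monoid N) (_ : Finite N) (φ : M →* N), φ m₁ ≠ φ m₂ := by
  refine forall₂_congr fun m₁ m₂ => imp_congr_right fun _ => ⟨?_, ?_⟩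
  · rintro ⟨N, _, _, ρ, map_one, map_mul, hne⟩
    exact ⟨N, _, ‹_›, ⟨⟨ρ, map_one⟩, map_mul⟩, hne⟩
  · rintro ⟨N, _, _, φ, hne⟩
    exact ⟨N, _, ‹_›, φ, φ.map_one, φ.map_mul, hne⟩

theorem MonoidResiduallyFinite.exists_monoidHom_injOn {M : Type} [Monoid M]
    (h : MonoidResiduallyFinite M) {s : Set M} (hs : s.Finite) :
    ∃ (N : Type) (_ : Monoid N) (_ : Finite N) (φ : M →* N), InjOn φ s := by
  let Pairs := {p : M × M | p.1 ∈ s ∧ p.2 ∈ s ∧ p.1 ≠ p.2}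
  have : Finite Pairs := (hs.prod hs).subset fun p hp => ⟨hp.1, hp.2.1⟩
  choose N _ _ φ hφ using fun p : Pairs => monoidResiduallyFinite_iff.1 h p.1.1 p.1.2 p.2.2.2
  refine ⟨_, _, inferInstance, MonoidHom.pi φ, fun a ha b hb hab => ?_⟩
  by_contra hne
  exact hφ ⟨(a, b), ha, hb, hne⟩ (congrFun hab _)

theorem finite_range_shift_comp_monoidHom {M N A : Type} [Monoid M] [Monoid N] [Finite N]
    (φ : M →* N) (g : N → A) : (range fun m : M => shift m (g ∘ φ)).Finite :=
  (finite_range fun n : N => fun k : M => g (φ k * n)).subset <|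
    range_subset_iff.2 fun m => ⟨φ m, funext fun k => by simp [shift]⟩

theorem MulAction.exists_monoidHom_finite_of_finite_orbit {M α : Type} [Monoid M]
    [MulAction M α] {a : α} (h : (orbit M a).Finite) :
    ∃ (N : Type) (_ : Monoid N) (_ : Finite N) (φ : M →* N),
      ∀ m m' : M, φ m = φ m' → m • a = m' • a := by
  have : Finite (orbit M a) := h
  refine ⟨Function.End (orbit M a), _, inferInstanceAs (Finite (orbit M a → orbit M a)),
    MulAction.toEndHom, fun m m' hmm' => ?_⟩
  exact congrArg Subtype.val (congrFun hmm' ⟨a, mem_orbit_self a⟩)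

abbrev shiftMulAction (M A : Type) [Monoid M] : MulAction M (M → A) where
  smul := shift
  one_smul x := funext fun k => congrArg x (mul_one k)
  mul_smul m n x := funext fun k => congrArg x (mul_assoc k m n).symm

theorem dense_iff_forall_finset_exists_eqOn {ι A : Type} [TopologicalSpace A]
    [DiscreteTopology A] {S : Set (ι → A)} :
    Dense S ↔ ∀ (x : ι → A) (I : Finset ι), ∃ y ∈ S, EqOn y x I := by
  constructor
  · intro hS x I
    have hopen : IsOpen ((I : Set ι).pi fun i => {x i}) :=
      isOpen_set_pi I.finite_toSet fun i _ => isOpen_discrete _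
    obtain ⟨y, hyI, hyS⟩ := hS.inter_open_nonempty _ hopen ⟨x, fun i _ => rfl⟩
    exact ⟨y, hyS, hyI⟩
  · intro h
    refine dense_iff_inter_open.2 fun U hU ⟨x, hxU⟩ => ?_
    obtain ⟨I, u, hu, hIU⟩ := isOpen_pi_iff.1 hU x hxU
    obtain ⟨y, hyS, hyx⟩ := h x I
    exact ⟨y, hIU fun i hi => hyx hi ▸ (hu i hi).2, hyS⟩

theorem MonoidResiduallyFinite.dense_periodic {M A : Type} [Monoid M] [TopologicalSpace A]
    [DiscreteTopology A] (h : MonoidResiduallyFinite M) :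
    Dense {x : M → A | (range fun m : M => shift m x).Finite} := by
  refine dense_iff_forall_finset_exists_eqOn.2 fun x I => ?_
  obtain ⟨N, _, _, φ, hφ⟩ := h.exists_monoidHom_injOn I.finite_toSet
  refine ⟨(x ∘ Function.invFunOn φ I) ∘ φ, finite_range_shift_comp_monoidHom φ _, fun i hi => ?_⟩
  simp [hφ.leftInvOn_invFunOn hi]

theorem monoidResiduallyFinite_of_dense_periodic {M A : Type} [Monoid M] [Nontrivial A]
    [TopologicalSpace A] [DiscreteTopology A]
    (h : Dense {x : M → A | (range fun m : M => shift m x).Finite}) :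
    MonoidResiduallyFinite M := by
  classical
  refine monoidResiduallyFinite_iff.2 fun m₁ m₂ hne => ?_
  obtain ⟨a, b, hab⟩ := exists_pair_ne A
  obtain ⟨y, hy, hyx⟩ := dense_iff_forall_finset_exists_eqOn.1 h
    (fun m => if m = m₁ then a else b) {m₁, m₂}
  have hy₁ : y m₁ = a := by simpa using hyx (by simp : m₁ ∈ ({m₁, m₂} : Finset M))
  have hy₂ : y m₂ = b := by simpa [hne.symm] using hyx (by simp : m₂ ∈ ({m₁, m₂} : Finset M))
  let := shiftMulAction M A
  obtain ⟨N, _, _, φ, hφ⟩ := MulAction.exists_monoidHom_finite_of_finite_orbit hy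
  refine ⟨N, _, ‹_›, φ, fun hφm => hab ?_⟩
  have hshift : y (1 * m₁) = y (1 * m₂) := congrFun (hφ m₁ m₂ hφm) 1
  rwa [one_mul, one_mul, hy₁, hy₂] at hshift

theorem stmt_19_general (M A : Type) [Monoid M] [Nontrivial A]
    [TopologicalSpace A] [DiscreteTopology A] :
    MonoidResiduallyFinite M ↔
      Dense {x : M → A | (Set.range fun m : M => shift m x).Finite} :=
  ⟨MonoidResiduallyFinite.dense_periodic, monoidResiduallyFinite_of_dense_periodic⟩

/-- `M` is residually finite iff the periodic configurations (those with finite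
shift orbit) are dense in `A^M` for the prodiscrete topology, where `A` is a
finite set with more than one element. -/
theorem stmt_19 (M A : Type) [Monoid M] [Finite A] [Nontrivial A]
    [TopologicalSpace A] [DiscreteTopology A] :
    MonoidResiduallyFinite M ↔
      Dense {x : M → A | (Set.range fun m : M => shift m x).Finite} :=
  stmt_19_general M A
end
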